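/- If λ = 0 and m > 2, then in the localization S[x_1^{-1}] of S at the powers of x_1, the set of elements of the form f/x_1^k with f ∈ S^G and k ≥ 0 equals the F-subalgebra of S[x_1^{-1}] generated by x_1, …, x_m, N_1, N_2, t_3, …, t_m together with x_1^{-1}; i.e. S^G[x_1^{-1}] = F[x_1,…,x_m,N_1,N_2,t_3,…,t_m][x_1^{-1}]. -/

import Mathlib

/-!
Write `R = F[x_i, N₁, N₂, t_j][x₁⁻¹]`, `Y = y₁` and `U = u₁₂`. Since `x₁ y₂ = U + x₂ Y` and
`x₁² y_j = t_j + x_{j-1} U + x₁ x_j Y`, the ring `S[x₁⁻¹]` is generated over `R` by `U` and `Y`,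
which satisfy the Artin–Schreier type equations `Y² = N₁ + x₁ Y` and
`U² = (x₁² N₂ + x₂² N₁ + x₁ t₃) + x₁² U`. Hence `S[x₁⁻¹] = R[U] + R[U] Y` and `R[U] = R + R U`.
Now `σ₁` fixes `R[U]` and sends `Y ↦ Y + x₁`, while `σ₂` fixes `R` and sends `U ↦ U + x₁²`.
As `x₁` is a unit, an invariant `a + b Y` has `b = 0`, and then an invariant `a + c U` has
`c = 0`. Conversely the generators of `R` are invariant, and `S^G[x₁⁻¹]` is exactly the ring of
invariants of the induced action on `S[x₁⁻¹]`.
-/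

open MvPolynomial

noncomputable section

/-- The variable x_i (1-based index); by convention 0 for i outside {1,…,m}. -/
def xv (F : Type) [Field F] (m : ℕ) (i : ℕ) : MvPolynomial (Fin m ⊕ Fin m) F :=
  if h : 1 ≤ i ∧ i ≤ m then X (Sum.inl ⟨i - 1, by omega⟩) else 0

/-- The variable y_i (1-based index); by convention 0 for i outside {1,…,m}. -/
def yv (F : Type) [Field F] (m : ℕ) (i : ℕ) : MvPolynomial (Fin m ⊕ Fin m) F :=
  if h : 1 ≤ i ∧ i ≤ m then X (Sum.inr ⟨i - 1, by omega⟩) else 0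

/-- n_i = y_i² + x_i y_i. -/
def nv (F : Type) [Field F] (m : ℕ) (i : ℕ) : MvPolynomial (Fin m ⊕ Fin m) F :=
  yv F m i ^ 2 + xv F m i * yv F m i

/-- u_{ab} = x_a y_b + x_b y_a. -/
def uv (F : Type) [Field F] (m : ℕ) (a b : ℕ) : MvPolynomial (Fin m ⊕ Fin m) F :=
  xv F m a * yv F m b + xv F m b * yv F m a

/-- N_i = n_i + (λ²+λ)·Σ_{j=1}^{i} u_{i−j+1,i+j} + Σ_{j=1}^{i−1} (u_{i−j,i+j} + u_{i−j,i+j−1}). -/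
def Nv (F : Type) [Field F] (m : ℕ) (lam : F) (i : ℕ) : MvPolynomial (Fin m ⊕ Fin m) F :=
  nv F m i + C (lam ^ 2 + lam) * ∑ j ∈ Finset.Icc 1 i, uv F m (i - j + 1) (i + j)
    + ∑ j ∈ Finset.Icc 1 (i - 1), (uv F m (i - j) (i + j) + uv F m (i - j) (i + j - 1))

/-- The norm N_G(y_j), the product of the distinct elements of the G-orbit
{y_j, y_j+x_j, y_j+λx_j+x_{j−1}, y_j+(λ+1)x_j+x_{j−1}} of y_j (these four elements are
pairwise distinct in every case in which the norm is used). -/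
def normYv (F : Type) [Field F] (m : ℕ) (lam : F) (j : ℕ) : MvPolynomial (Fin m ⊕ Fin m) F :=
  yv F m j * (yv F m j + xv F m j) * (yv F m j + C lam * xv F m j + xv F m (j - 1)) *
    (yv F m j + C (lam + 1) * xv F m j + xv F m (j - 1))

/-- t_j = u_{12}·x_{j−1} + u_{1j}·x_1. -/
def tv (F : Type) [Field F] (m : ℕ) (j : ℕ) : MvPolynomial (Fin m ⊕ Fin m) F :=
  uv F m 1 2 * xv F m (j - 1) + uv F m 1 j * xv F m 1

/-- The invariant subalgebra S^G for G = ⟨σ1, σ2⟩. -/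
def invSub {F : Type} [Field F] {τ : Type} (σ1 σ2 : MvPolynomial τ F ≃ₐ[F] MvPolynomial τ F) :
    Subalgebra F (MvPolynomial τ F) :=
  AlgHom.equalizer (σ1 : MvPolynomial τ F →ₐ[F] MvPolynomial τ F) (AlgHom.id F _) ⊓
    AlgHom.equalizer (σ2 : MvPolynomial τ F →ₐ[F] MvPolynomial τ F) (AlgHom.id F _)

/-- The transfer Tr(f) = Σ_{g ∈ G} g·f for the Klein four group G = {1, σ1, σ2, σ1σ2}. -/
def trf {F : Type} [Field F] {τ : Type} (σ1 σ2 : MvPolynomial τ F ≃ₐ[F] MvPolynomial τ F)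
    (f : MvPolynomial τ F) : MvPolynomial τ F :=
  f + σ1 f + σ2 f + σ1 (σ2 f)

/-- Products of two homogeneous G-invariants of positive degree; the span of this set over
S^G is (S^G_+)², the square of the ideal of S^G generated by the homogeneous invariants of
positive degree.  An invariant is *indecomposable* iff it does not lie in this span. -/
def decompSet {F : Type} [Field F] {τ : Type}
    (σ1 σ2 : MvPolynomial τ F ≃ₐ[F] MvPolynomial τ F) : Set (MvPolynomial τ F) :=
  {f | ∃ a b : MvPolynomial τ F,
    (σ1 a = a ∧ σ2 a = a ∧ ∃ d, 0 < d ∧ a.IsHomogeneous d) ∧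
    (σ1 b = b ∧ σ2 b = b ∧ ∃ d, 0 < d ∧ b.IsHomogeneous d) ∧ f = a * b}

section ArtinSchreier

variable {K L : Type*} [CommRing K] [CommRing L] [Algebra K L] {A : Subalgebra K L}

theorem Subalgebra.mem_of_pow_mul_mem {w a b : L} (hw : w ∈ A) (hwa : w * a = 1) {k : ℕ}
    (h : a ^ k * b ∈ A) : b ∈ A := by
  have : b = w ^ k * (a ^ k * b) := by
    rw [← mul_assoc, ← mul_pow, hwa, one_pow, one_mul]
  exact this ▸ mul_mem (pow_mem hw k) h

variable {y n t : L}

theorem exists_eq_add_mul_of_mem_adjoin_insert (hn : n ∈ A) (ht : t ∈ A)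
    (hy : y ^ 2 = n + t * y) {z : L} (hz : z ∈ Algebra.adjoin K (insert y (A : Set L))) :
    ∃ a ∈ A, ∃ b ∈ A, z = a + b * y := by
  induction hz using Algebra.adjoin_induction with
  | mem z hz =>
    rcases hz with rfl | hz
    · exact ⟨0, A.zero_mem, 1, A.one_mem, by ring⟩
    · exact ⟨z, hz, 0, A.zero_mem, by ring⟩
  | algebraMap r => exact ⟨algebraMap K L r, A.algebraMap_mem r, 0, A.zero_mem, by ring⟩
  | add _ _ _ _ h₁ h₂ =>
    obtain ⟨a, ha, b, hb, rfl⟩ := h₁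
    obtain ⟨c, hc, d, hd, rfl⟩ := h₂
    exact ⟨a + c, add_mem ha hc, b + d, add_mem hb hd, by ring⟩
  | mul _ _ _ _ h₁ h₂ =>
    obtain ⟨a, ha, b, hb, rfl⟩ := h₁
    obtain ⟨c, hc, d, hd, rfl⟩ := h₂
    refine ⟨a * c + b * d * n, add_mem (mul_mem ha hc) (mul_mem (mul_mem hb hd) hn),
      a * d + b * c + b * d * t,
      add_mem (add_mem (mul_mem ha hd) (mul_mem hb hc)) (mul_mem (mul_mem hb hd) ht), ?_⟩
    linear_combination b * d * hy

theorem mem_of_mem_adjoin_insert_of_map_eq_self (hn : n ∈ A) (ht : t ∈ A)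
    (hy : y ^ 2 = n + t * y) (htu : IsUnit t) (σ : L →ₐ[K] L) (hσA : ∀ a ∈ A, σ a = a)
    (hσy : σ y = y + t) {z : L} (hz : z ∈ Algebra.adjoin K (insert y (A : Set L)))
    (hσz : σ z = z) : z ∈ A := by
  obtain ⟨a, ha, b, hb, rfl⟩ := exists_eq_add_mul_of_mem_adjoin_insert hn ht hy hz
  have hbt : b * t = 0 := by
    rw [map_add, map_mul, hσA a ha, hσA b hb, hσy] at hσz
    linear_combination hσz
  rw [htu.mul_left_eq_zero.1 hbt, zero_mul, add_zero]
  exact ha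

end ArtinSchreier

section AwayLift

variable {F S : Type*} [CommRing F] [CommRing S] [Algebra F S] {x : S}

def awayLift (σ : S →ₐ[F] S) (hσ : σ x = x) :
    Localization.Away x →ₐ[F] Localization.Away x :=
  IsLocalization.Away.liftAlgHom x
    (f := (IsScalarTower.toAlgHom F S (Localization.Away x)).comp σ)
    (by simpa [hσ] using IsLocalization.Away.algebraMap_isUnit x)

variable {σ : S →ₐ[F] S} {hσ : σ x = x}

@[simp]
theorem awayLift_algebraMap (p : S) :
    awayLift σ hσ (algebraMap S _ p) = algebraMap S _ (σ p) := by
  simp [awayLift]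

theorem awayLift_eq_self_iff [NoZeroDivisors S] (hx : x ≠ 0) {z : Localization.Away x} {f : S}
    {k : ℕ} (h : algebraMap S _ x ^ k * z = algebraMap S _ f) :
    awayLift σ hσ z = z ↔ σ f = f := by
  have hσf : algebraMap S _ (σ f) = algebraMap S _ x ^ k * awayLift σ hσ z := by
    rw [← awayLift_algebraMap (hσ := hσ), ← h, map_mul, map_pow, awayLift_algebraMap, hσ]
  have hunit := (IsLocalization.Away.algebraMap_isUnit (S := Localization.Away x) x).pow k
  rw [← hunit.mul_right_inj, ← hσf, h,
    (IsLocalization.injective _ (powers_le_nonZeroDivisors_of_noZeroDivisors hx)).eq_iff]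

theorem eqOn_awayLift_adjoin {P : Set S} (hP : ∀ p ∈ P, σ p = p) :
    Set.EqOn (awayLift σ hσ) (AlgHom.id F _)
      (Algebra.adjoin F (algebraMap S (Localization.Away x) '' P ∪
        {z | z * algebraMap S _ x = 1})) := by
  refine AlgHom.eqOn_adjoin_iff.2 ?_
  rintro _ (⟨p, hp, rfl⟩ | hz)
  · simp [hP p hp]
  · have hunit := IsLocalization.Away.algebraMap_isUnit (S := Localization.Away x) x
    refine hunit.mul_left_inj.1 ?_
    have hx : awayLift σ hσ (algebraMap S _ x) = algebraMap S _ x := by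
      rw [awayLift_algebraMap, hσ]
    rw [AlgHom.id_apply, hz.out, ← hx, ← map_mul, hz.out, map_one]

theorem Subalgebra.eq_top_of_algebraMap_mem (B : Subalgebra F (Localization.Away x))
    (h : ∀ p, algebraMap S _ p ∈ B) {w : Localization.Away x} (hw : w ∈ B)
    (hwx : w * algebraMap S _ x = 1) : B = ⊤ := by
  refine eq_top_iff.2 fun z _ => ?_
  obtain ⟨k, a, ha⟩ := IsLocalization.Away.surj x z
  exact B.mem_of_pow_mul_mem hw hwx (by rw [mul_comm, ha]; exact h a)

end AwayLift

section KleinFour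

variable {F : Type} [Field F] {m : ℕ}

local notation "𝕊" => MvPolynomial (Fin m ⊕ Fin m) F
local notation "𝕃" => Localization.Away (xv F m 1)

theorem xv_succ (i : Fin m) : xv F m (i + 1) = X (Sum.inl i) := by
  rw [xv, dif_pos ⟨by omega, by omega⟩]
  rfl

theorem yv_succ (i : Fin m) : yv F m (i + 1) = X (Sum.inr i) := by
  rw [yv, dif_pos ⟨by omega, by omega⟩]
  rfl

theorem xv_one_ne_zero (hm : 1 ≤ m) : xv F m 1 ≠ 0 := by
  rw [xv, dif_pos ⟨le_rfl, hm⟩]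
  exact X_ne_zero _

theorem Nv_zero_one : Nv F m 0 1 = nv F m 1 := by
  simp [Nv]

theorem Nv_zero_two : Nv F m 0 2 = nv F m 2 + (uv F m 1 3 + uv F m 1 2) := by
  simp [Nv]

variable (F m) in
def invGens : Set 𝕊 :=
  (xv F m '' Set.Icc 1 m) ∪ {Nv F m 0 1, Nv F m 0 2} ∪ (tv F m '' Set.Icc 3 m)

theorem xv_mem_invGens {i : ℕ} (h₁ : 1 ≤ i) (h₂ : i ≤ m) : xv F m i ∈ invGens F m :=
  Or.inl (Or.inl ⟨i, ⟨h₁, h₂⟩, rfl⟩)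

theorem Nv_zero_one_mem_invGens : Nv F m 0 1 ∈ invGens F m :=
  Or.inl (Or.inr (Or.inl rfl))

theorem Nv_zero_two_mem_invGens : Nv F m 0 2 ∈ invGens F m :=
  Or.inl (Or.inr (Or.inr rfl))

theorem tv_mem_invGens {j : ℕ} (h₁ : 3 ≤ j) (h₂ : j ≤ m) : tv F m j ∈ invGens F m :=
  Or.inr ⟨j, ⟨h₁, h₂⟩, rfl⟩

variable (F m) in
def invGensAlg : Subalgebra F 𝕃 :=
  Algebra.adjoin F (algebraMap _ _ '' invGens F m ∪ {z | z * algebraMap _ _ (xv F m 1) = 1})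

theorem algebraMap_mem_invGensAlg {p : 𝕊} (hp : p ∈ invGens F m) :
    algebraMap _ 𝕃 p ∈ invGensAlg F m :=
  Algebra.subset_adjoin (Or.inl ⟨p, hp, rfl⟩)

theorem exists_mul_eq_one_mem_invGensAlg :
    ∃ w ∈ invGensAlg F m, w * algebraMap _ 𝕃 (xv F m 1) = 1 := by
  have h := IsLocalization.Away.mul_invSelf (S := 𝕃) (xv F m 1)
  rw [mul_comm] at h
  exact ⟨_, Algebra.subset_adjoin (Or.inr h), h⟩

theorem eqOn_awayLift_invGensAlg (σ : 𝕊 →ₐ[F] 𝕊) (hσ : σ (xv F m 1) = xv F m 1)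
    (h : ∀ p ∈ invGens F m, σ p = p) :
    Set.EqOn (awayLift σ hσ) (AlgHom.id F _) (invGensAlg F m : Set 𝕃) :=
  eqOn_awayLift_adjoin h

theorem map_uv_one_two₂ (hm : 2 ≤ m) (σ : 𝕊 →ₐ[F] 𝕊) (hx : ∀ i, σ (xv F m i) = xv F m i)
    (hy₁ : σ (yv F m 1) = yv F m 1)
    (hy : ∀ i, 2 ≤ i → i ≤ m → σ (yv F m i) = yv F m i + xv F m (i - 1)) :
    σ (uv F m 1 2) = uv F m 1 2 + xv F m 1 ^ 2 := by
  simp only [uv, map_add, map_mul, hx, hy₁, hy 2 le_rfl hm, Nat.add_one_sub_one]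
  ring

variable [CharP F 2]

theorem yv_one_sq : yv F m 1 ^ 2 = Nv F m 0 1 + xv F m 1 * yv F m 1 := by
  have h2 : (2 : 𝕊) = 0 := CharTwo.two_eq_zero
  rw [Nv_zero_one, nv]
  linear_combination (-(xv F m 1 * yv F m 1)) * h2

theorem xv_one_mul_yv_two : xv F m 1 * yv F m 2 = uv F m 1 2 + xv F m 2 * yv F m 1 := by
  have h2 : (2 : 𝕊) = 0 := CharTwo.two_eq_zero
  rw [uv]
  linear_combination (-(xv F m 2 * yv F m 1)) * h2

theorem xv_one_sq_mul_yv (j : ℕ) :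
    xv F m 1 ^ 2 * yv F m j
      = tv F m j + xv F m (j - 1) * uv F m 1 2 + xv F m 1 * xv F m j * yv F m 1 := by
  have h2 : (2 : 𝕊) = 0 := CharTwo.two_eq_zero
  rw [tv, uv, uv]
  linear_combination (-(xv F m 2 * xv F m (j - 1) * yv F m 1)
    - xv F m 1 * xv F m (j - 1) * yv F m 2 - xv F m 1 * xv F m j * yv F m 1) * h2

theorem uv_one_two_sq : uv F m 1 2 ^ 2
    = (xv F m 1 ^ 2 * Nv F m 0 2 + xv F m 2 ^ 2 * Nv F m 0 1 + xv F m 1 * tv F m 3)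
      + xv F m 1 ^ 2 * uv F m 1 2 := by
  have h2 : (2 : 𝕊) = 0 := CharTwo.two_eq_zero
  simp only [Nv_zero_one, Nv_zero_two, tv, nv, uv, Nat.add_one_sub_one]
  linear_combination (xv F m 1 * xv F m 2 * yv F m 1 * yv F m 2
    - xv F m 1 * xv F m 2 ^ 2 * yv F m 1 - xv F m 1 ^ 2 * xv F m 3 * yv F m 1
    - xv F m 1 ^ 2 * xv F m 2 * yv F m 2 - xv F m 1 ^ 2 * xv F m 2 * yv F m 1
    - xv F m 1 ^ 3 * yv F m 3 - xv F m 1 ^ 3 * yv F m 2) * h2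

theorem map_eq_self_of_mem_invGens₁ (hm : 3 ≤ m) (σ : 𝕊 →ₐ[F] 𝕊)
    (hx : ∀ i, σ (xv F m i) = xv F m i)
    (hy : ∀ i, 1 ≤ i → i ≤ m → σ (yv F m i) = yv F m i + xv F m i)
    {p : 𝕊} (hp : p ∈ invGens F m) : σ p = p := by
  have h2 : (2 : 𝕊) = 0 := CharTwo.two_eq_zero
  rcases hp with (⟨i, -, rfl⟩ | rfl | rfl) | ⟨j, ⟨hj, hjm⟩, rfl⟩
  · exact hx i
  · simp only [Nv_zero_one, nv, map_add, map_mul, map_pow, hx, hy 1 le_rfl (by omega)]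
    linear_combination (xv F m 1 * yv F m 1 + xv F m 1 ^ 2) * h2
  · simp only [Nv_zero_two, nv, uv, map_add, map_mul, map_pow, hx, hy 1 le_rfl (by omega),
      hy 2 (by omega) (by omega), hy 3 (by omega) hm]
    linear_combination (xv F m 2 * yv F m 2 + xv F m 2 ^ 2 + xv F m 1 * xv F m 3
      + xv F m 1 * xv F m 2) * h2
  · simp only [tv, uv, map_add, map_mul, hx, hy 1 le_rfl (by omega), hy 2 (by omega) (by omega),
      hy j (by omega) hjm]
    linear_combination (xv F m 1 * xv F m 2 * xv F m (j - 1) + xv F m 1 ^ 2 * xv F m j) * h2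

theorem map_eq_self_of_mem_invGens₂ (hm : 3 ≤ m) (σ : 𝕊 →ₐ[F] 𝕊)
    (hx : ∀ i, σ (xv F m i) = xv F m i) (hy₁ : σ (yv F m 1) = yv F m 1)
    (hy : ∀ i, 2 ≤ i → i ≤ m → σ (yv F m i) = yv F m i + xv F m (i - 1))
    {p : 𝕊} (hp : p ∈ invGens F m) : σ p = p := by
  have h2 : (2 : 𝕊) = 0 := CharTwo.two_eq_zero
  rcases hp with (⟨i, -, rfl⟩ | rfl | rfl) | ⟨j, ⟨hj, hjm⟩, rfl⟩
  · exact hx i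
  · simp only [Nv_zero_one, nv, map_add, map_mul, map_pow, hx, hy₁]
  · simp only [Nv_zero_two, nv, uv, map_add, map_mul, map_pow, hx, hy₁,
      hy 2 le_rfl (by omega), hy 3 (by omega) hm, Nat.add_one_sub_one]
    linear_combination (xv F m 1 * yv F m 2 + xv F m 1 * xv F m 2 + xv F m 1 ^ 2) * h2
  · simp only [tv, uv, map_add, map_mul, hx, hy₁, hy 2 le_rfl (by omega), hy j (by omega) hjm,
      Nat.add_one_sub_one]
    linear_combination (xv F m 1 ^ 2 * xv F m (j - 1)) * h2

theorem map_uv_one_two₁ (hm : 2 ≤ m) (σ : 𝕊 →ₐ[F] 𝕊) (hx : ∀ i, σ (xv F m i) = xv F m i)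
    (hy : ∀ i, 1 ≤ i → i ≤ m → σ (yv F m i) = yv F m i + xv F m i) :
    σ (uv F m 1 2) = uv F m 1 2 := by
  have h2 : (2 : 𝕊) = 0 := CharTwo.two_eq_zero
  simp only [uv, map_add, map_mul, hx, hy 1 le_rfl (by omega), hy 2 (by omega) hm]
  linear_combination (xv F m 1 * xv F m 2) * h2

theorem adjoin_insert_yv_adjoin_insert_uv_eq_top (hm : 3 ≤ m) :
    Algebra.adjoin F (insert (algebraMap _ 𝕃 (yv F m 1))
      (Algebra.adjoin F (insert (algebraMap _ 𝕃 (uv F m 1 2)) (invGensAlg F m : Set 𝕃)) :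
        Set 𝕃)) = ⊤ := by
  set φ := algebraMap 𝕊 𝕃
  set B := Algebra.adjoin F (insert (φ (yv F m 1))
    (Algebra.adjoin F (insert (φ (uv F m 1 2)) (invGensAlg F m : Set 𝕃)) : Set 𝕃))
  have hY : φ (yv F m 1) ∈ B := Algebra.subset_adjoin (Set.mem_insert _ _)
  have hU : φ (uv F m 1 2) ∈ B :=
    Algebra.subset_adjoin (Set.mem_insert_of_mem _ (Algebra.subset_adjoin (Set.mem_insert _ _)))
  have hR {z} (hz : z ∈ invGensAlg F m) : z ∈ B :=
    Algebra.subset_adjoin (Set.mem_insert_of_mem _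
      (Algebra.subset_adjoin (Set.mem_insert_of_mem _ hz)))
  have hx {i : ℕ} (h₁ : 1 ≤ i) (h₂ : i ≤ m) : φ (xv F m i) ∈ B :=
    hR (algebraMap_mem_invGensAlg (xv_mem_invGens h₁ h₂))
  obtain ⟨w, hw, hwx⟩ := exists_mul_eq_one_mem_invGensAlg (F := F) (m := m)
  refine B.eq_top_of_algebraMap_mem (fun p => ?_) (hR hw) hwx
  suffices (⊤ : Subalgebra F 𝕊) ≤ B.comap (IsScalarTower.toAlgHom F 𝕊 𝕃) from this trivial
  rw [← adjoin_range_X, Algebra.adjoin_le_iff]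
  rintro _ ⟨v, rfl⟩
  change φ (X v) ∈ B
  rcases v with i | ⟨_ | _ | j, hj⟩
  · rw [← xv_succ]
    exact hx (by omega) (by omega)
  · rw [← yv_succ]
    exact hY
  · rw [← yv_succ]
    change φ (yv F m 2) ∈ B
    refine B.mem_of_pow_mul_mem (hR hw) hwx (k := 1) ?_
    rw [pow_one, ← map_mul, xv_one_mul_yv_two, map_add, map_mul]
    exact add_mem hU (mul_mem (hx (by omega) (by omega)) hY)
  · rw [← yv_succ]
    change φ (yv F m (j + 3)) ∈ B
    refine B.mem_of_pow_mul_mem (hR hw) hwx (k := 2) ?_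
    rw [← map_pow, ← map_mul, xv_one_sq_mul_yv, map_add, map_add, map_mul, map_mul, map_mul]
    exact add_mem (add_mem (hR (algebraMap_mem_invGensAlg (tv_mem_invGens (by omega) hj)))
      (mul_mem (hx (by omega) (by omega)) hU))
      (mul_mem (mul_mem (hx le_rfl (by omega)) (hx (by omega) hj)) hY)

theorem mem_adjoin_insert_uv_of_awayLift_eq_self (hm : 3 ≤ m) (σ : 𝕊 →ₐ[F] 𝕊)
    (hx : ∀ i, σ (xv F m i) = xv F m i)
    (hy : ∀ i, 1 ≤ i → i ≤ m → σ (yv F m i) = yv F m i + xv F m i)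
    {z : 𝕃} (hz : awayLift σ (hx 1) z = z) :
    z ∈ Algebra.adjoin F (insert (algebraMap _ 𝕃 (uv F m 1 2)) (invGensAlg F m : Set 𝕃)) := by
  set φ := algebraMap 𝕊 𝕃
  have hR := eqOn_awayLift_invGensAlg σ (hx 1)
    fun _ hp => map_eq_self_of_mem_invGens₁ hm σ hx hy hp
  have hRU : Set.EqOn (awayLift σ (hx 1)) (AlgHom.id F _)
      (Algebra.adjoin F (insert (φ (uv F m 1 2)) (invGensAlg F m : Set 𝕃)) : Set 𝕃) := by
    refine AlgHom.eqOn_adjoin_iff.2 ?_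
    rintro _ (rfl | ha)
    · rw [awayLift_algebraMap, map_uv_one_two₁ (by omega) σ hx hy, AlgHom.id_apply]
    · exact hR ha
  have hmem {p : 𝕊} (hp : p ∈ invGens F m) :
      φ p ∈ Algebra.adjoin F (insert (φ (uv F m 1 2)) (invGensAlg F m : Set 𝕃)) :=
    Algebra.subset_adjoin (Set.mem_insert_of_mem _ (algebraMap_mem_invGensAlg hp))
  refine mem_of_mem_adjoin_insert_of_map_eq_self (y := φ (yv F m 1)) (hmem Nv_zero_one_mem_invGens)
    (hmem (xv_mem_invGens le_rfl (by omega))) (by rw [← map_pow, yv_one_sq, map_add, map_mul])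
    (IsLocalization.Away.algebraMap_isUnit _) _ (fun a ha => hRU ha)
    (by rw [awayLift_algebraMap, hy 1 le_rfl (by omega), map_add]) ?_ hz
  rw [adjoin_insert_yv_adjoin_insert_uv_eq_top hm]
  trivial

theorem mem_invGensAlg_of_awayLift_eq_self (hm : 3 ≤ m) (σ : 𝕊 →ₐ[F] 𝕊)
    (hx : ∀ i, σ (xv F m i) = xv F m i) (hy₁ : σ (yv F m 1) = yv F m 1)
    (hy : ∀ i, 2 ≤ i → i ≤ m → σ (yv F m i) = yv F m i + xv F m (i - 1)) {z : 𝕃}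
    (hzU : z ∈ Algebra.adjoin F (insert (algebraMap _ 𝕃 (uv F m 1 2)) (invGensAlg F m : Set 𝕃)))
    (hz : awayLift σ (hx 1) z = z) : z ∈ invGensAlg F m := by
  set φ := algebraMap 𝕊 𝕃
  have hmem {p : 𝕊} (hp : p ∈ invGens F m) : φ p ∈ invGensAlg F m := algebraMap_mem_invGensAlg hp
  have hx₁ := hmem (xv_mem_invGens le_rfl (by omega))
  have hM : φ (xv F m 1 ^ 2 * Nv F m 0 2 + xv F m 2 ^ 2 * Nv F m 0 1 + xv F m 1 * tv F m 3)
      ∈ invGensAlg F m := by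
    simp only [map_add, map_mul, map_pow]
    exact add_mem (add_mem (mul_mem (pow_mem hx₁ 2) (hmem Nv_zero_two_mem_invGens))
      (mul_mem (pow_mem (hmem (xv_mem_invGens (by omega) (by omega))) 2)
        (hmem Nv_zero_one_mem_invGens)))
      (mul_mem hx₁ (hmem (tv_mem_invGens le_rfl hm)))
  exact mem_of_mem_adjoin_insert_of_map_eq_self hM (pow_mem hx₁ 2)
    (by rw [← map_pow, uv_one_two_sq, map_add, map_mul, map_pow])
    ((IsLocalization.Away.algebraMap_isUnit _).pow 2) _
    (fun a ha => eqOn_awayLift_invGensAlg σ (hx 1)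
      (fun _ hp => map_eq_self_of_mem_invGens₂ hm σ hx hy₁ hy hp) ha)
    (by rw [awayLift_algebraMap, map_uv_one_two₂ (by omega) σ hx hy₁ hy, map_add, map_pow])
    hzU hz

end KleinFour

theorem stmt_11 (F : Type) [Field F] [CharP F 2] (m : ℕ) (hm : 2 < m)
    (σ1 σ2 : MvPolynomial (Fin m ⊕ Fin m) F ≃ₐ[F] MvPolynomial (Fin m ⊕ Fin m) F)
    (hσ1x : ∀ i, σ1 (xv F m i) = xv F m i)
    (hσ2x : ∀ i, σ2 (xv F m i) = xv F m i)
    (hσ1y : ∀ i, 1 ≤ i → i ≤ m → σ1 (yv F m i) = yv F m i + xv F m i)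
    (hσ2y1 : σ2 (yv F m 1) = yv F m 1)
    (hσ2y : ∀ i, 2 ≤ i → i ≤ m → σ2 (yv F m i) = yv F m i + xv F m (i - 1)) :
    {z : Localization.Away (xv F m 1) | ∃ (f : MvPolynomial (Fin m ⊕ Fin m) F) (k : ℕ),
        σ1 f = f ∧ σ2 f = f ∧
        algebraMap (MvPolynomial (Fin m ⊕ Fin m) F) (Localization.Away (xv F m 1))
            (xv F m 1) ^ k * z
          = algebraMap (MvPolynomial (Fin m ⊕ Fin m) F) (Localization.Away (xv F m 1)) f}
      = ↑(Algebra.adjoin F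
          ((algebraMap (MvPolynomial (Fin m ⊕ Fin m) F) (Localization.Away (xv F m 1)) ''
              ((xv F m '' Set.Icc 1 m) ∪ {Nv F m 0 1, Nv F m 0 2} ∪
                (tv F m '' Set.Icc 3 m))) ∪
            {z : Localization.Away (xv F m 1) |
              z * algebraMap (MvPolynomial (Fin m ⊕ Fin m) F) (Localization.Away (xv F m 1))
                (xv F m 1) = 1})) := by
  have hx₁ : xv F m 1 ≠ 0 := xv_one_ne_zero (by omega)
  have hR₁ := eqOn_awayLift_invGensAlg (σ1 : _ →ₐ[F] _) (hσ1x 1)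
    fun _ hp => map_eq_self_of_mem_invGens₁ hm σ1 hσ1x hσ1y hp
  have hR₂ := eqOn_awayLift_invGensAlg (σ2 : _ →ₐ[F] _) (hσ2x 1)
    fun _ hp => map_eq_self_of_mem_invGens₂ hm σ2 hσ2x hσ2y1 hσ2y hp
  ext z
  constructor
  · rintro ⟨f, k, hf₁, hf₂, hf⟩
    have hzU := mem_adjoin_insert_uv_of_awayLift_eq_self hm σ1 hσ1x hσ1y
      ((awayLift_eq_self_iff hx₁ hf).2 hf₁)
    exact mem_invGensAlg_of_awayLift_eq_self hm σ2 hσ2x hσ2y1 hσ2y hzU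
      ((awayLift_eq_self_iff hx₁ hf).2 hf₂)
  · intro hz
    obtain ⟨k, f, hf⟩ := IsLocalization.Away.surj (xv F m 1) z
    rw [mul_comm] at hf
    exact ⟨f, k, (awayLift_eq_self_iff hx₁ hf).1 (hR₁ hz), (awayLift_eq_self_iff hx₁ hf).1 (hR₂ hz),
      hf⟩
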